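/- arXiv:1308.3383 — 3 statements merged into one kernel-verified Lean document; each statement's English description precedes it below -/
import Mathlib

section
/- Let G be the graph on nodes {a,b,c} with symmetric edge weights E(a,b)=1, self loop E(c,c)=2 (contributing 2 to volume), and all other weights 0, and let G' be identical except E(a,b)=0. Let C = {{a},{b},{c}}. Then G' is a C-consistent improvement of G (only a between-cluster edge weight is decreased), yet modularity satisfies Q(G,C) = 1/8 > 0 = Q(G',C). Hence modularity is not monotonic. -/
open Finset

noncomputable def vol {V : Type*} [Fintype V] (E : V → V → ℝ) (c : Finset V) : ℝ :=
  ∑ i ∈ c, ∑ j, E i j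

noncomputable def win {V : Type*} (E : V → V → ℝ) (c : Finset V) : ℝ :=
  ∑ i ∈ c, ∑ j ∈ c, E i j

noncomputable def Qmod {V : Type*} [Fintype V] (E : V → V → ℝ) (C : Finset (Finset V)) : ℝ :=
  ∑ c ∈ C, (win E c / vol E univ - (vol E c / vol E univ) ^ 2)

/-- `i` and `j` lie in the same cluster of the clustering `C`. -/
def samePart {V : Type*} (C : Finset (Finset V)) (i j : V) : Prop :=
  ∃ c ∈ C, i ∈ c ∧ j ∈ c

/-- `E'` is a `C`-consistent improvement of `E`. -/
def ConsImp {V : Type*} (E E' : V → V → ℝ) (C : Finset (Finset V)) : Prop :=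
  ∀ i j, (samePart C i j → E i j ≤ E' i j) ∧ (¬ samePart C i j → E' i j ≤ E i j)

/-- The graph G: E(a,b)=E(b,a)=1, E(c,c)=2, rest 0. -/
noncomputable def Eg : Fin 3 → Fin 3 → ℝ := fun i j => !![0, 1, 0; 1, 0, 0; 0, 0, 2] i j

/-- The graph G': same as G except E(a,b)=0. -/
noncomputable def Eg' : Fin 3 → Fin 3 → ℝ := fun i j => !![0, 0, 0; 0, 0, 0; 0, 0, 2] i j

/-- Modularity is not monotonic: G' is a C-consistent improvement of G, yet
Q(G,C) = 1/8 > 0 = Q(G',C). -/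
theorem modularity_not_monotonic :
    ConsImp Eg Eg' ({{0}, {1}, {2}} : Finset (Finset (Fin 3))) ∧
    Qmod Eg {{0}, {1}, {2}} = 1 / 8 ∧
    Qmod Eg' {{0}, {1}, {2}} = 0 ∧
    Qmod Eg ({{0}, {1}, {2}} : Finset (Finset (Fin 3))) >
      Qmod Eg' ({{0}, {1}, {2}} : Finset (Finset (Fin 3))) := by
  have hQ : Qmod Eg {{0}, {1}, {2}} = 1 / 8 := by
    simp [Qmod, vol, win, Eg, Fin.sum_univ_three, Finset.sum_insert, Finset.mem_insert, Matrix.vecHead, Matrix.vecTail]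
    norm_num [Matrix.cons_val_zero, Matrix.cons_val_one]
  have hQ' : Qmod Eg' {{0}, {1}, {2}} = 0 := by
    simp [Qmod, vol, win, Eg', Fin.sum_univ_three, Finset.sum_insert, Finset.mem_insert, Matrix.vecHead, Matrix.vecTail]
  refine ⟨?_, hQ, hQ', by rw [hQ, hQ']; norm_num⟩
  intro i j
  constructor
  · rintro ⟨c, hc, hi, hj⟩
    fin_cases hc <;> simp_all <;> subst_vars <;> simp [Eg, Eg', Matrix.vecHead, Matrix.vecTail]
  · intro _
    fin_cases i <;> fin_cases j <;> simp [Eg, Eg', Matrix.vecHead, Matrix.vecTail]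
end

section
/- Let d be a nonempty cluster in a clustering of a clique graph of C with weight k > 0, so that v_d ≥ w_d ≥ k. Let M ≥ 0, β > 0, and define q(d) = w_d/(M + v_d/β) - (v_d/(M + v_d/β))^2. Then w_d/v_d - β - βM/k ≤ q(d)/β ≤ w_d/v_d - β + 2β²M/k. -/
/-- Bounds on the contribution `q(d) = w_d/(M + v_d/β) - (v_d/(M + v_d/β))²` of a
cluster of a clique graph (so `k ≤ w_d ≤ v_d`) to adaptive scale modularity:
`w_d/v_d - β - βM/k ≤ q(d)/β ≤ w_d/v_d - β + 2β²M/k`. -/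
theorem adaptive_contribution_bounds
    (wd vd k M β : ℝ) (hk : 0 < k) (hkw : k ≤ wd) (hwv : wd ≤ vd)
    (hM : 0 ≤ M) (hβ : 0 < β) :
    wd / vd - β - β * M / k
        ≤ (wd / (M + vd / β) - (vd / (M + vd / β)) ^ 2) / β ∧
    (wd / (M + vd / β) - (vd / (M + vd / β)) ^ 2) / β
        ≤ wd / vd - β + 2 * β ^ 2 * M / k := by
  have hw : 0 < wd := hk.trans_le hkw
  have hv : 0 < vd := hw.trans_le hwv
  have hD : 0 < M + vd / β := by positivity
  set D := M + vd / β with hDdef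
  clear_value D
  have hβD : β * D = β * M + vd := by rw [hDdef]; field_simp
  have hvD : vd ≤ β * D := by nlinarith
  have hkD : k ≤ β * D := by nlinarith
  -- x = vd / D
  have hx : vd / D ≤ β := (div_le_iff₀ hD).mpr (by linarith [hvD, mul_comm β D])
  have hx0 : 0 < vd / D := by positivity
  have hMk : M / D ≤ β * M / k := by
    rw [div_le_div_iff₀ hD hk]; nlinarith [mul_nonneg hM (sub_nonneg.mpr hkD)]
  have hβx : β - vd / D = β * M / D := by
    field_simp; nlinarith [hβD]
  -- step A : wd / D ≤ β * (wd / vd)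
  have hA : wd / D ≤ β * (wd / vd) := by
    rw [div_le_iff₀ hD, show β * (wd / vd) * D = β * D * wd / vd by ring, le_div_iff₀ hv]
    nlinarith [hvD, hw]
  -- step B : β^2 - (vd/D)^2 ≤ 2 * β^3 * M / k
  have hB : β ^ 2 - (vd / D) ^ 2 ≤ 2 * β ^ 3 * M / k := by
    have h1 : β ^ 2 - (vd / D) ^ 2 = (β - vd / D) * (β + vd / D) := by ring
    have h2 : (β - vd / D) * (β + vd / D) ≤ (β * M / D) * (2 * β) := by
      rw [hβx]
      have hnn : 0 ≤ β * M / D := by positivity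
      nlinarith [hx, hx0]
    have h3 : (β * M / D) * (2 * β) ≤ 2 * β ^ 3 * M / k := by
      have : β * M / D = β * (M / D) := by ring
      rw [this]
      have h := mul_le_mul_of_nonneg_right
        (mul_le_mul_of_nonneg_left hMk hβ.le) (by positivity : (0:ℝ) ≤ 2 * β)
      have heq : β * (β * M / k) * (2 * β) = 2 * β ^ 3 * M / k := by ring
      linarith
    linarith
  -- step C : (vd/D)^2 ≤ β^2
  have hC : (vd / D) ^ 2 ≤ β ^ 2 := by nlinarith [hx, hx0]
  -- step Dd : β * (wd / vd) - wd / D ≤ β^2 * M / k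
  have hDd : β * (wd / vd) - wd / D ≤ β ^ 2 * M / k := by
    have e : β * (wd / vd) - wd / D = wd * (β * M) / (vd * D) := by
      field_simp; nlinarith [hβD]
    rw [e, div_le_div_iff₀ (by positivity) hk]
    have h4 : β * M * vd * k ≤ β * M * vd * (β * D) :=
      mul_le_mul_of_nonneg_left hkD (by positivity)
    have h5 : β * M * wd * k ≤ β * M * vd * k :=
      mul_le_mul_of_nonneg_right
        (mul_le_mul_of_nonneg_left hwv (by positivity)) hk.le
    nlinarith [h4, h5]
  constructor
  · rw [le_div_iff₀ hβ]
    have expand : (wd / vd - β - β * M / k) * β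
        = β * (wd / vd) - β ^ 2 - β ^ 2 * M / k := by ring
    rw [expand]
    linarith [hDd, hC]
  · rw [div_le_iff₀ hβ]
    have expand : (wd / vd - β + 2 * β ^ 2 * M / k) * β
        = β * (wd / vd) - β ^ 2 + 2 * β ^ 3 * M / k := by ring
    rw [expand]
    linarith [hA, hB]
end

section
/- For fixed γ > 0 and a clustering C where every cluster contribution is well-defined, lim_{M→∞} M · Q_{M,γ}(G,C) = \sum_{c∈C} w_c, i.e. in the limit adaptive scale modularity scaled by M behaves like (negated) unnormalized cut. -/
open Finset

/-- Adaptive scale modularity with parameters `M` and `γ`. -/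
noncomputable def Qasm {V : Type*} [Fintype V] (E : V → V → ℝ) (M γ : ℝ)
    (C : Finset (Finset V)) : ℝ :=
  ∑ c ∈ C, (win E c / (M + γ * vol E c) - (vol E c / (M + γ * vol E c)) ^ 2)

/-- As `M → ∞`, `M · Q_{M,γ}(G,C)` tends to `∑_{c∈C} w_c`: in the limit, adaptive
scale modularity behaves like (negated) unnormalized cut. -/
theorem adaptive_scale_modularity_limit_unnormalized_cut
    {V : Type*} [Fintype V] (γ : ℝ) (hγ : 0 < γ)
    (E : V → V → ℝ) (C : Finset (Finset V))
    (hw : ∀ c ∈ C, 0 ≤ win E c) (hwv : ∀ c ∈ C, win E c ≤ vol E c) :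
    Filter.Tendsto (fun M : ℝ => M * Qasm E M γ C) Filter.atTop
      (nhds (∑ c ∈ C, win E c)) := by
  have key : ∀ c ∈ C,
      Filter.Tendsto (fun M : ℝ =>
        M * (win E c / (M + γ * vol E c) - (vol E c / (M + γ * vol E c)) ^ 2))
        Filter.atTop (nhds (win E c)) := by
    intro c hc
    set a := γ * vol E c with ha
    have hdenom : Filter.Tendsto (fun M : ℝ => M + a) Filter.atTop Filter.atTop :=
      Filter.tendsto_atTop_add_const_right _ a Filter.tendsto_id
    have hratio : Filter.Tendsto (fun M : ℝ => M / (M + a)) Filter.atTop (nhds 1) := by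
      have h1 : Filter.Tendsto (fun M : ℝ => a / (M + a)) Filter.atTop (nhds 0) :=
        Filter.Tendsto.div_atTop tendsto_const_nhds hdenom
      have h2 : Filter.Tendsto (fun M : ℝ => 1 - a / (M + a)) Filter.atTop (nhds (1 - 0)) :=
        Filter.Tendsto.sub tendsto_const_nhds h1
      rw [sub_zero] at h2
      apply h2.congr'
      filter_upwards [Filter.eventually_gt_atTop (max 0 (-a))] with M hM
      have hMa : M + a ≠ 0 := by
        have : -a < M := lt_of_le_of_lt (le_max_right _ _) hM
        linarith
      field_simp; ring
    have hinv : Filter.Tendsto (fun M : ℝ => (M + a)⁻¹) Filter.atTop (nhds 0) :=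
      hdenom.inv_tendsto_atTop
    have hterm1 : Filter.Tendsto (fun M : ℝ => M * (win E c / (M + a)))
        Filter.atTop (nhds (win E c)) := by
      have := hratio.const_mul (win E c)
      rw [mul_one] at this
      apply this.congr
      intro M; ring
    have hterm2 : Filter.Tendsto (fun M : ℝ => M * (vol E c / (M + a)) ^ 2)
        Filter.atTop (nhds 0) := by
      have h := ((hratio.mul hinv).const_mul ((vol E c) ^ 2))
      rw [one_mul, mul_zero] at h
      apply h.congr
      intro M; field_simp
    have := hterm1.sub hterm2
    rw [sub_zero] at this
    apply this.congr
    intro M; ring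
  have hsum := tendsto_finset_sum C key
  apply hsum.congr
  intro M
  rw [Qasm, Finset.mul_sum]
end
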